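/- arXiv:2310.18128 — 2 statements merged into one kernel-verified Lean document; each statement's English description precedes it below -/
import Mathlib

section
/- Consider an Intermediary grid with parameters (n, m, (r_i), (c_j), (d_i), (b_j), U), and assume n ≥ m ≥ 2 and that there exists a strictly increasing sequence of integers 0 ≤ s_0 < s_1 < … < s_{m−2} ≤ n−2 with r_{s_i} = c_i for every 0 ≤ i ≤ m−2. Then there exists a directed path from (0,0) to (n−1,m−1) that uses no horizontal arcs, uses exactly the diagonal arcs (s_j, j)→(s_j+1, j+1) for 0 ≤ j ≤ m−2 (and otherwise vertical arcs), and has total weight exactly (n−m)·U + Σ_{j=0}^{m−2} d_{s_j}·b_j. -/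
/-- A single step of a monotone (directed) grid path:
coordinates change by (1,0), (0,1), or (1,1). -/
def MStep (u v : ℕ × ℕ) : Prop :=
  (v.1 = u.1 + 1 ∧ v.2 = u.2) ∨ (v.1 = u.1 ∧ v.2 = u.2 + 1) ∨
    (v.1 = u.1 + 1 ∧ v.2 = u.2 + 1)

/-- `π` is a directed grid path from `s` to `t`. -/
def MPath (π : List (ℕ × ℕ)) (s t : ℕ × ℕ) : Prop :=
  π ≠ [] ∧ π.head? = some s ∧ π.getLast? = some t ∧ π.Chain' MStep

/-- Weight of a directed path: the sum of the weights of its arcs. -/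
noncomputable def acost (w : ℕ × ℕ → ℕ × ℕ → ℝ) (π : List (ℕ × ℕ)) : ℝ :=
  ((π.zip π.tail).map fun p => w p.1 p.2).sum

/-- Arc weights of the Intermediary grid: horizontal arcs `(i,j)→(i,j+1)` and
vertical arcs `(i,j)→(i+1,j)` have weight `U`; the diagonal arc
`(i,j)→(i+1,j+1)` has weight `d_i·b_j` if `r_i = c_j` and `√U` otherwise. -/
noncomputable def interW (r c d b : ℕ → ℕ) (U : ℕ) (u v : ℕ × ℕ) : ℝ :=
  if v = (u.1 + 1, u.2 + 1) then
    (if r u.1 = c u.2 then ((d u.1 * b u.2 : ℕ) : ℝ) else Real.sqrt U)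
  else (U : ℝ)

/-! The path visits row `i` in column `#{j < m - 1 | s j < i}`, so it leaves row `s j`
diagonally from `(s j, j)` and every other row vertically. Since `r (s j) = c j`, its diagonal
arcs weigh `d (s j) * b j`, and the remaining `(n - 1) - (m - 1)` arcs are vertical, of weight `U`.
-/

open Finset

theorem zip_tail_map_range {α : Type*} (g : ℕ → α) (k : ℕ) :
    ((List.range (k + 1)).map g).zip ((List.range (k + 1)).map g).tail =
      (List.range k).map fun i => (g i, g (i + 1)) := by
  induction k generalizing g with
  | zero => simp
  | succ k ih =>
    have := ih (g ∘ Nat.succ)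
    simp only [List.range_succ_eq_map (n := k + 1), List.range_succ_eq_map (n := k)] at this ⊢
    simp_all [List.map_map, Function.comp_def]

theorem sum_ite_mem_of_subset {ι M : Type*} [DecidableEq ι] [AddCommMonoid M] {s t : Finset ι}
    (h : t ⊆ s) (f : ι → M) (c : M) :
    ∑ i ∈ s, (if i ∈ t then f i else c) = ∑ i ∈ t, f i + #(s \ t) • c := by
  rw [sum_ite, filter_mem_eq_inter, inter_eq_right.2 h, filter_notMem_eq_sdiff, sum_const]

theorem mPath_map_range (g : ℕ → ℕ × ℕ) (k : ℕ) (h : ∀ i < k, MStep (g i) (g (i + 1))) :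
    MPath ((List.range (k + 1)).map g) (g 0) (g k) := by
  refine ⟨by simp, by simp [List.range_succ_eq_map], by simp [List.range_succ], ?_⟩
  exact List.isChain_map g |>.2 <| (List.isChain_range_succ _ k).2 h

theorem acost_map_range (w : ℕ × ℕ → ℕ × ℕ → ℝ) (g : ℕ → ℕ × ℕ) (k : ℕ) :
    acost w ((List.range (k + 1)).map g) = ∑ i ∈ range k, w (g i) (g (i + 1)) := by
  rw [acost, zip_tail_map_range, List.map_map]
  rfl

theorem interW_diag_of_eq {r c d b : ℕ → ℕ} {U i j : ℕ} (h : r i = c j) :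
    interW r c d b U (i, j) (i + 1, j + 1) = ((d i * b j : ℕ) : ℝ) := by
  simp [interW, h]

theorem interW_vertical (r c d b : ℕ → ℕ) (U i j : ℕ) :
    interW r c d b U (i, j) (i + 1, j) = U := by
  simp [interW]

section StairCol

variable {k : ℕ} {s : ℕ → ℕ} {i j : ℕ}

def stairCol (k : ℕ) (s : ℕ → ℕ) (i : ℕ) : ℕ := #{j ∈ range k | s j < i}

theorem stairCol_zero : stairCol k s 0 = 0 := by simp [stairCol]

theorem stairCol_of_forall_lt (h : ∀ j < k, s j < i) : stairCol k s i = k := by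
  rw [stairCol, filter_true_of_mem fun j hj => h j (mem_range.1 hj), card_range]

theorem stairCol_succ_of_forall_ne (h : ∀ j < k, s j ≠ i) :
    stairCol k s (i + 1) = stairCol k s i := by
  refine congrArg card (filter_congr fun j hj => ?_)
  have := h j (mem_range.1 hj)
  omega

variable (hs : StrictMonoOn s (Set.Iio k))
include hs

theorem stairCol_apply (hj : j < k) : stairCol k s (s j) = j := by
  suffices {l ∈ range k | s l < s j} = range j by rw [stairCol, this, card_range]
  ext l
  simp only [mem_filter, mem_range]
  constructor
  · rintro ⟨hl, hlt⟩
    exact (hs.lt_iff_lt hl hj).1 hlt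
  · intro hl
    exact ⟨hl.trans hj, hs (hl.trans hj) hj hl⟩

theorem stairCol_succ_apply (hj : j < k) : stairCol k s (s j + 1) = j + 1 := by
  suffices {l ∈ range k | s l < s j + 1} = range (j + 1) by rw [stairCol, this, card_range]
  ext l
  simp only [mem_filter, mem_range, Nat.lt_succ_iff]
  constructor
  · rintro ⟨hl, hle⟩
    exact (hs.le_iff_le hl hj).1 hle
  · intro hl
    have hl' : l < k := by omega
    exact ⟨hl', (hs.le_iff_le hl' hj).2 hl⟩

theorem stairCol_succ_eq_or :
    stairCol k s (i + 1) = stairCol k s i ∨ stairCol k s (i + 1) = stairCol k s i + 1 := by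
  by_cases h : ∀ j < k, s j ≠ i
  · exact .inl (stairCol_succ_of_forall_ne h)
  · push Not at h
    obtain ⟨j, hj, rfl⟩ := h
    exact .inr (by rw [stairCol_succ_apply hs hj, stairCol_apply hs hj])

theorem stairCol_succ_eq_add_one_iff :
    stairCol k s (i + 1) = stairCol k s i + 1 ↔ ∃ j < k, (i, stairCol k s i) = (s j, j) := by
  constructor
  · intro h
    by_contra! hne
    have : ∀ j < k, s j ≠ i := fun j hj hji => hne j hj (by rw [← hji, stairCol_apply hs hj])
    rw [stairCol_succ_of_forall_ne this] at h
    omega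
  · rintro ⟨j, hj, hij⟩
    obtain ⟨rfl, -⟩ := Prod.mk.inj hij
    rw [stairCol_succ_apply hs hj, stairCol_apply hs hj]

end StairCol

def stairPath (k : ℕ) (s : ℕ → ℕ) (N : ℕ) : List (ℕ × ℕ) :=
  (List.range (N + 1)).map fun i => (i, stairCol k s i)

section StairPath

variable {k N : ℕ} {s : ℕ → ℕ}

theorem zip_tail_stairPath :
    (stairPath k s N).zip (stairPath k s N).tail =
      (List.range N).map fun i => ((i, stairCol k s i), (i + 1, stairCol k s (i + 1))) :=
  zip_tail_map_range _ N

variable (hs : StrictMonoOn s (Set.Iio k))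
include hs

theorem mPath_stairPath (hlt : ∀ j < k, s j < N) : MPath (stairPath k s N) (0, 0) (N, k) := by
  have := mPath_map_range (fun i => (i, stairCol k s i)) N fun i _ => by
    rcases stairCol_succ_eq_or (i := i) hs with h | h <;> simp [MStep, h]
  rwa [stairCol_zero, stairCol_of_forall_lt hlt] at this

theorem interW_stairCol {r c d b : ℕ → ℕ} {U : ℕ} (hid : ∀ j < k, r (s j) = c j) (i : ℕ) :
    interW r c d b U (i, stairCol k s i) (i + 1, stairCol k s (i + 1)) =
      if i ∈ (range k).image s then ((d i * b (stairCol k s i) : ℕ) : ℝ) else U := by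
  split_ifs with h
  · obtain ⟨j, hj, rfl⟩ := mem_image.1 h
    rw [mem_range] at hj
    rw [stairCol_succ_apply hs hj, stairCol_apply hs hj, interW_diag_of_eq (hid j hj)]
  · rw [stairCol_succ_of_forall_ne fun j hj hji => h (mem_image.2 ⟨j, mem_range.2 hj, hji⟩),
      interW_vertical]

theorem acost_stairPath {r c d b : ℕ → ℕ} {U : ℕ} (hid : ∀ j < k, r (s j) = c j)
    (hlt : ∀ j < k, s j < N) :
    acost (interW r c d b U) (stairPath k s N) =
      ((N - k : ℕ) : ℝ) * U + ((∑ j ∈ range k, d (s j) * b j : ℕ) : ℝ) := by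
  have hinj : Set.InjOn s (range k) := hs.injOn.mono fun j hj => mem_range.1 hj
  have hsub : (range k).image s ⊆ range N := by
    simpa [subset_iff] using hlt
  rw [stairPath, acost_map_range]
  simp only [interW_stairCol hs hid]
  rw [sum_ite_mem_of_subset hsub, sum_image hinj, card_sdiff_of_subset hsub,
    card_image_of_injOn hinj, card_range, card_range, nsmul_eq_mul, add_comm, Nat.cast_sum]
  congr 1
  exact sum_congr rfl fun j hj => by rw [stairCol_apply hs (mem_range.1 hj)]

end StairPath

theorem stmt9_general (n m : ℕ) (r c d b : ℕ → ℕ) (U : ℕ)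
    (hmn : m ≤ n) (hm : 2 ≤ m)
    (s : ℕ → ℕ)
    (hmono : ∀ i j : ℕ, i < j → j ≤ m - 2 → s i < s j)
    (hlast : s (m - 2) ≤ n - 2)
    (hid : ∀ i ≤ m - 2, r (s i) = c i) :
    ∃ π : List (ℕ × ℕ), MPath π (0, 0) (n - 1, m - 1) ∧
      (π.zip π.tail).countP (fun p => decide (p.2 = (p.1.1, p.1.2 + 1))) = 0 ∧
      (∀ p ∈ π.zip π.tail,
        p.2 = (p.1.1 + 1, p.1.2 + 1) ↔ ∃ j < m - 1, p.1 = (s j, j)) ∧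
      acost (interW r c d b U) π
        = ((n - m : ℕ) : ℝ) * (U : ℝ)
          + ((∑ j ∈ Finset.range (m - 1), d (s j) * b j : ℕ) : ℝ) := by
  have hs : StrictMonoOn s (Set.Iio (m - 1)) := fun i _ j hj hij =>
    hmono i j hij (by rw [Set.mem_Iio] at hj; omega)
  have hlt : ∀ j < m - 1, s j < n - 1 := fun j hj =>
    (hs.monotoneOn hj (show m - 2 < m - 1 by omega) (by omega)).trans_lt (by omega)
  refine ⟨stairPath (m - 1) s (n - 1), mPath_stairPath hs hlt, ?_, ?_, ?_⟩
  · simp [zip_tail_stairPath]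
  · simp only [zip_tail_stairPath, List.forall_mem_map]
    exact fun i _ => (Prod.mk_right_injective _).eq_iff.trans (stairCol_succ_eq_add_one_iff hs)
  · rw [acost_stairPath hs (fun j hj => hid j (by omega)) hlt]
    congr 3
    omega

/-- In an Intermediary grid with `n ≥ m ≥ 2` and a strictly
increasing sequence `0 ≤ s_0 < … < s_{m−2} ≤ n−2` with `r_{s_i} = c_i`, there
exists a directed path from `(0,0)` to `(n−1,m−1)` that uses no horizontal
arcs, uses exactly the diagonal arcs `(s_j, j)→(s_j+1, j+1)` for
`0 ≤ j ≤ m−2` (and otherwise vertical arcs), and has total weight exactly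
`(n−m)·U + Σ_{j=0}^{m−2} d_{s_j}·b_j`. -/
theorem stmt9 (n m : ℕ) (r c d b : ℕ → ℕ) (U : ℕ)
    (hb : ∀ j, b j ≤ 1) (hU : 0 < U)
    (hmn : m ≤ n) (hm : 2 ≤ m)
    (s : ℕ → ℕ)
    (hmono : ∀ i j : ℕ, i < j → j ≤ m - 2 → s i < s j)
    (hlast : s (m - 2) ≤ n - 2)
    (hid : ∀ i ≤ m - 2, r (s i) = c i) :
    ∃ π : List (ℕ × ℕ), MPath π (0, 0) (n - 1, m - 1) ∧
      (π.zip π.tail).countP (fun p => decide (p.2 = (p.1.1, p.1.2 + 1))) = 0 ∧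
      (∀ p ∈ π.zip π.tail,
        p.2 = (p.1.1 + 1, p.1.2 + 1) ↔ ∃ j < m - 1, p.1 = (s j, j)) ∧
      acost (interW r c d b U) π
        = ((n - m : ℕ) : ℝ) * (U : ℝ)
          + ((∑ j ∈ Finset.range (m - 1), d (s j) * b j : ℕ) : ℝ) :=
  stmt9_general n m r c d b U hmn hm s hmono hlast hid
end

section
/- Consider an Intermediary grid with parameters (n, m, (r_i), (c_j), (d_i), (b_j), U) satisfying the gadget structure with parameters g, A₂, A₃, A₄: namely, n ≥ m ≥ 2; g ≥ 2 is an integer dividing both n−1 and m−1; r_i = i mod g and c_j = j mod g for all i, j; A₂, A₃, A₄ are positive integers with A₃ > n²·A₂ and A₄ ≥ n·A₃ + n·A₂; for every row index i < n−1 with i ≡ 0 (mod g) one has d_i = (n−i)·A₃; for every row index i < n−1 with i ≡ g−1 (mod g) one has d_i = A₄ − (n−(i−g+1))·A₃; every other row index i satisfies 0 ≤ d_i ≤ n·A₂; b_j = 1 for every column index j < m−1 with j ≡ 0 (mod g) or j ≡ g−1 (mod g); U > 1 and (m−1)·A₄ < √U. For multiples i₀, j₀ of g with i₀ + g ≤ n−1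 and j₀ + g ≤ m−1, the main diagonal arcs of the gadget with top-left corner (i₀,j₀) are the arcs (i₀+p, j₀+p)→(i₀+p+1, j₀+p+1) for 0 ≤ p ≤ g−1. Then every minimum-weight directed path from (0,0) to (n−1,m−1) that uses at least one main diagonal arc of some gadget uses all g main diagonal arcs of that gadget. -/
/-!
Potential-function argument. Put
`Φ(i, j) = U (i - j) + A₄ ⌊j / g⌋ + [j mod g ≠ 0] (n - i + j mod g) A₃`.
The weight of a path from `(0,0)` to `(n-1,m-1)` is `Φ(n-1,m-1) - Φ(0,0)` plus the sum of the
reduced weights `w(u,v) - (Φ v - Φ u)` of its arcs. Every reduced weight is nonnegative: it is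
`0` on vertical arcs in columns `j ≡ 0` and on matched diagonals leaving such a column or
column `j ≡ g - 1`, it is `d_i b_j ≤ n A₂` on the other matched diagonals, and it is at least
`A₃` on horizontal arcs, on vertical arcs in columns `j ≢ 0` and on unmatched diagonals
(these need `√U > 2 A₄`). The path that runs down the diagonal to column `m - 1` and then
straight down has total reduced weight at most `(n - 1) n A₂ < A₃`, so a minimum-weight path
avoids all the costly arcs. The only remaining arc into or out of a vertex of a column
`j ≢ 0 (mod g)` is the diagonal one, so such a path, once on the main diagonal of a gadget,
stays on it from corner to corner.
-/

namespace List

variable {α : Type*} {l : List α}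

theorem mem_zip_tail_iff {e : α × α} :
    e ∈ l.zip l.tail ↔ ∃ k, ∃ h : k + 1 < l.length, e = (l[k], l[k + 1]) := by
  simp only [mem_iff_getElem, getElem_zip, getElem_tail, length_zip, length_tail]
  constructor
  · rintro ⟨k, hk, rfl⟩
    exact ⟨k, by omega, rfl⟩
  · rintro ⟨k, hk, rfl⟩
    exact ⟨k, by omega, rfl⟩

theorem IsChain.rel_of_mem_zip_tail {R : α → α → Prop} (hl : l.IsChain R) {u v : α}
    (h : (u, v) ∈ l.zip l.tail) : R u v := by
  obtain ⟨k, hk, he⟩ := mem_zip_tail_iff.1 h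
  simp only [Prod.mk.injEq] at he
  rw [he.1, he.2]
  exact isChain_iff_getElem.1 hl k hk

theorem exists_succ_mem_zip_tail {u v : α} (h : (u, v) ∈ l.zip l.tail)
    (hv : l.getLast? ≠ some v) : ∃ w, (v, w) ∈ l.zip l.tail := by
  obtain ⟨k, hk, he⟩ := mem_zip_tail_iff.1 h
  simp only [Prod.mk.injEq] at he
  by_cases hk2 : k + 2 < l.length
  · exact ⟨l[k + 2], mem_zip_tail_iff.2 ⟨k + 1, hk2, by rw [he.2]⟩⟩
  · refine absurd ?_ hv
    rw [getLast?_eq_getElem?, he.2, getElem?_eq_getElem (by omega)]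
    congr 2
    omega

theorem exists_pred_mem_zip_tail {v w : α} (h : (v, w) ∈ l.zip l.tail)
    (hv : l.head? ≠ some v) : ∃ u, (u, v) ∈ l.zip l.tail := by
  obtain ⟨k, hk, he⟩ := mem_zip_tail_iff.1 h
  simp only [Prod.mk.injEq] at he
  obtain _ | k := k
  · exact absurd (by rw [head?_eq_getElem?, he.1, getElem?_eq_getElem]) hv
  · exact ⟨l[k], mem_zip_tail_iff.2 ⟨k, by omega, by rw [he.1]⟩⟩

end List

theorem acost_cons_cons (w : ℕ × ℕ → ℕ × ℕ → ℝ) (a b : ℕ × ℕ) (π : List (ℕ × ℕ)) :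
    acost w (a :: b :: π) = w a b + acost w (b :: π) := by
  simp [acost]

theorem acost_add (w w' : ℕ × ℕ → ℕ × ℕ → ℝ) (π : List (ℕ × ℕ)) :
    acost (fun u v => w u v + w' u v) π = acost w π + acost w' π :=
  List.sum_map_add

theorem acost_sub_potential (φ : ℕ × ℕ → ℝ) {π : List (ℕ × ℕ)} {s t : ℕ × ℕ}
    (hs : π.head? = some s) (ht : π.getLast? = some t) :
    acost (fun u v => φ v - φ u) π = φ t - φ s := by
  induction π generalizing s with
  | nil => simp at hs
  | cons a π ih =>
    obtain rfl : a = s := by simpa using hs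
    cases π with
    | nil => simp_all [acost]
    | cons b π =>
      rw [acost_cons_cons, ih rfl (by rwa [List.getLast?_cons_cons] at ht)]
      ring

noncomputable def reducedWeight (w : ℕ × ℕ → ℕ × ℕ → ℝ) (φ : ℕ × ℕ → ℝ) (u v : ℕ × ℕ) : ℝ :=
  w u v - (φ v - φ u)

theorem acost_eq_sub_add_acost_reducedWeight (w : ℕ × ℕ → ℕ × ℕ → ℝ) (φ : ℕ × ℕ → ℝ)
    {π : List (ℕ × ℕ)} {s t : ℕ × ℕ} (hs : π.head? = some s) (ht : π.getLast? = some t) :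
    acost w π = φ t - φ s + acost (reducedWeight w φ) π := by
  rw [← acost_sub_potential φ hs ht, ← acost_add]
  simp [reducedWeight]

theorem MStep.le {u v : ℕ × ℕ} (h : MStep u v) : u ≤ v := by
  rcases h with ⟨h1, h2⟩ | ⟨h1, h2⟩ | ⟨h1, h2⟩ <;> exact Prod.mk_le_mk.2 ⟨by omega, by omega⟩

theorem MPath.le_target {π : List (ℕ × ℕ)} {s t : ℕ × ℕ} (hπ : MPath π s t) :
    ∀ v ∈ π, v ≤ t := by
  obtain ⟨-, -, ht, hchain⟩ := hπ
  refine hchain.backwards_induction (· ≤ t) _ (fun x y hxy hy => hxy.le.trans hy) fun lne => ?_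
  rw [List.getLast?_eq_some_getLast lne] at ht
  exact (Option.some.inj ht).le

noncomputable def gadgetPotential (n g A₃ A₄ U : ℕ) (v : ℕ × ℕ) : ℝ :=
  U * ((v.1 : ℝ) - v.2) + A₄ * (v.2 / g : ℕ) +
    if v.2 % g = 0 then 0 else ((n : ℝ) - v.1 + (v.2 % g : ℕ)) * A₃

section Potential

variable (n A₃ A₄ U : ℕ)

theorem gadgetPotential_mul_add {g s : ℕ} (hs : s < g) (i q : ℕ) :
    gadgetPotential n g A₃ A₄ U (i, g * q + s) =
      U * ((i : ℝ) - (g * q + s : ℕ)) + A₄ * q +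
        if s = 0 then 0 else ((n : ℝ) - i + s) * A₃ := by
  have hg : 0 < g := by omega
  simp [gadgetPotential, Nat.mul_add_div hg, Nat.mod_eq_of_lt hs, Nat.div_eq_of_lt hs]

theorem gadgetPotential_vertical_sub (g i j : ℕ) :
    gadgetPotential n g A₃ A₄ U (i + 1, j) - gadgetPotential n g A₃ A₄ U (i, j) =
      U - if j % g = 0 then 0 else (A₃ : ℝ) := by
  unfold gadgetPotential
  split_ifs <;> push_cast <;> ring

theorem gadgetPotential_diag_sub {g : ℕ} (hg : 2 ≤ g) (i j : ℕ) :
    gadgetPotential n g A₃ A₄ U (i + 1, j + 1) - gadgetPotential n g A₃ A₄ U (i, j) =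
      if j % g = 0 then ((n : ℝ) - i) * A₃
      else if j % g = g - 1 then A₄ - ((n : ℝ) - i + (g - 1 : ℕ)) * A₃ else 0 := by
  obtain ⟨q, s, hs, rfl⟩ : ∃ q s, s < g ∧ j = g * q + s :=
    ⟨j / g, j % g, Nat.mod_lt _ (by omega), (Nat.div_add_mod j g).symm⟩
  have hmod : (g * q + s) % g = s := by rw [Nat.mul_add_mod, Nat.mod_eq_of_lt hs]
  rw [hmod, gadgetPotential_mul_add n A₃ A₄ U hs]
  rcases Nat.lt_or_ge (s + 1) g with hs1 | hs1
  · rw [show g * q + s + 1 = g * q + (s + 1) by ring, gadgetPotential_mul_add n A₃ A₄ U hs1,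
      if_neg (by omega : s ≠ g - 1), if_neg (by omega : s + 1 ≠ 0)]
    rcases Nat.eq_zero_or_pos s with rfl | hs0
    · simp only [↓reduceIte]
      push_cast
      ring
    · rw [if_neg hs0.ne', if_neg hs0.ne']
      push_cast
      ring
  · obtain rfl : s = g - 1 := by omega
    rw [show g * q + (g - 1) + 1 = g * (q + 1) + 0 by rw [Nat.mul_succ]; omega,
      gadgetPotential_mul_add n A₃ A₄ U (by omega), if_neg (by omega : g - 1 ≠ 0),
      if_neg (by omega : g - 1 ≠ 0), if_pos rfl, if_pos rfl]
    push_cast [Nat.cast_sub (by omega : 1 ≤ g)]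
    ring

theorem gadgetPotential_diag_sub_le {g : ℕ} (hg : 2 ≤ g) (hA : n * A₃ ≤ A₄) {i : ℕ}
    (hi : i < n) (j : ℕ) :
    gadgetPotential n g A₃ A₄ U (i + 1, j + 1) - gadgetPotential n g A₃ A₄ U (i, j) ≤ A₄ := by
  have hA' : (n : ℝ) * A₃ ≤ A₄ := by exact_mod_cast hA
  have hi' : (i : ℝ) ≤ n := by exact_mod_cast hi.le
  rw [gadgetPotential_diag_sub n A₃ A₄ U hg]
  split_ifs
  · nlinarith [(A₃.cast_nonneg : (0 : ℝ) ≤ A₃), (i.cast_nonneg : (0 : ℝ) ≤ i)]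
  · nlinarith [(A₃.cast_nonneg : (0 : ℝ) ≤ A₃), ((g - 1).cast_nonneg : (0 : ℝ) ≤ (g - 1 : ℕ))]
  · positivity

end Potential

def IsCheapArc (g : ℕ) (r c : ℕ → ℕ) (u v : ℕ × ℕ) : Prop :=
  (v = (u.1 + 1, u.2) ∧ u.2 % g = 0) ∨ (v = (u.1 + 1, u.2 + 1) ∧ r u.1 = c u.2)

def IsCostlyArc (g : ℕ) (r c : ℕ → ℕ) (u v : ℕ × ℕ) : Prop :=
  v = (u.1, u.2 + 1) ∨ (v = (u.1 + 1, u.2) ∧ u.2 % g ≠ 0) ∨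
    (v = (u.1 + 1, u.2 + 1) ∧ r u.1 ≠ c u.2)

section Arcs

variable {g : ℕ} {r c : ℕ → ℕ} {u v : ℕ × ℕ}

theorem MStep.isCheapArc_or_isCostlyArc (h : MStep u v) :
    IsCheapArc g r c u v ∨ IsCostlyArc g r c u v := by
  unfold MStep at h
  simp only [IsCheapArc, IsCostlyArc, Prod.ext_iff]
  by_cases u.2 % g = 0 <;> by_cases r u.1 = c u.2 <;> omega

theorem IsCheapArc.eq_diag_of_target (h : IsCheapArc g r c u v) (hv : v.2 % g ≠ 0) :
    v = (u.1 + 1, u.2 + 1) := by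
  rcases h with ⟨rfl, hu⟩ | ⟨rfl, -⟩
  · exact absurd hu hv
  · rfl

theorem IsCheapArc.eq_diag_of_source (h : IsCheapArc g r c u v) (hu : u.2 % g ≠ 0) :
    v = (u.1 + 1, u.2 + 1) := by
  rcases h with ⟨rfl, hu'⟩ | ⟨rfl, -⟩
  · exact absurd hu' hu
  · rfl

end Arcs

def diagThenDown (n m : ℕ) : List (ℕ × ℕ) :=
  (List.range n).map fun t => (t, min t (m - 1))

section DiagThenDown

variable {n m : ℕ}

theorem mPath_diagThenDown (hmn : m ≤ n) (hm : 1 ≤ m) :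
    MPath (diagThenDown n m) (0, 0) (n - 1, m - 1) := by
  refine ⟨by simp [diagThenDown]; omega, ?_, ?_, ?_⟩
  · simp [diagThenDown, List.head?_range]; omega
  · simp [diagThenDown, List.getLast?_range]; omega
  · refine (List.isChain_map _).2 ((List.isChain_range _ _).2 fun t ht => ?_)
    simp only [MStep, true_and]
    omega

theorem mem_zip_tail_diagThenDown {e : (ℕ × ℕ) × (ℕ × ℕ)}
    (h : e ∈ (diagThenDown n m).zip (diagThenDown n m).tail) :
    ∃ t, t + 1 < n ∧ e = ((t, min t (m - 1)), (t + 1, min (t + 1) (m - 1))) := by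
  obtain ⟨t, ht, rfl⟩ := List.mem_zip_tail_iff.1 h
  simp only [diagThenDown, List.length_map, List.length_range] at ht
  exact ⟨t, ht, by simp [diagThenDown]⟩

end DiagThenDown

section ReducedWeight

variable {n m g A₂ A₃ A₄ U : ℕ} {r c d b : ℕ → ℕ}

local notation "ρ" => reducedWeight (interW r c d b U) (gadgetPotential n g A₃ A₄ U)

theorem reducedWeight_vertical (i j : ℕ) :
    ρ (i, j) (i + 1, j) = if j % g = 0 then 0 else (A₃ : ℝ) := by
  rw [reducedWeight, gadgetPotential_vertical_sub]
  simp [interW]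

theorem le_reducedWeight_horizontal (hg : 2 ≤ g) (hA : n * A₃ ≤ A₄) (hU : 2 * (A₄ : ℝ) ≤ U)
    {i : ℕ} (hi : i < n) (j : ℕ) : (A₃ : ℝ) ≤ ρ (i, j) (i, j + 1) := by
  have hdiag := gadgetPotential_diag_sub_le n A₃ A₄ U hg hA hi j
  have hvert := gadgetPotential_vertical_sub n A₃ A₄ U g i (j + 1)
  have hA₃ : (A₃ : ℝ) ≤ A₄ := by exact_mod_cast (Nat.le_mul_of_pos_left A₃ (by omega)).trans hA
  have hw : interW r c d b U (i, j) (i, j + 1) = U := by simp [interW]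
  rw [reducedWeight, hw]
  split_ifs at hvert <;> linarith

theorem le_reducedWeight_diag_of_ne (hg : 2 ≤ g) (hA : n * A₃ ≤ A₄)
    (hU : 2 * (A₄ : ℝ) ≤ √U) {i j : ℕ} (hi : i < n) (hrc : r i ≠ c j) :
    (A₃ : ℝ) ≤ ρ (i, j) (i + 1, j + 1) := by
  have hdiag := gadgetPotential_diag_sub_le n A₃ A₄ U hg hA hi j
  have hA₃ : (A₃ : ℝ) ≤ A₄ := by exact_mod_cast (Nat.le_mul_of_pos_left A₃ (by omega)).trans hA
  have hw : interW r c d b U (i, j) (i + 1, j + 1) = √U := by simp [interW, hrc]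
  rw [reducedWeight, hw]
  linarith

theorem reducedWeight_diag_of_eq (hg : 2 ≤ g) (hA : n * A₃ ≤ A₄)
    (hr : ∀ i < n, r i = i % g) (hc : ∀ j < m, c j = j % g)
    (hd0 : ∀ i, i < n - 1 → i % g = 0 → d i = (n - i) * A₃)
    (hdlast : ∀ i, i < n - 1 → i % g = g - 1 → d i = A₄ - (n - (i + 1 - g)) * A₃)
    (hbact : ∀ j, j < m - 1 → (j % g = 0 ∨ j % g = g - 1) → b j = 1)
    {i j : ℕ} (hi : i + 1 < n) (hj : j + 1 < m) (hrc : r i = c j) :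
    ρ (i, j) (i + 1, j + 1) = if j % g = 0 ∨ j % g = g - 1 then 0 else ((d i * b j : ℕ) : ℝ) := by
  have hij : i % g = j % g := by rw [← hr i (by omega), ← hc j (by omega), hrc]
  have hw : interW r c d b U (i, j) (i + 1, j + 1) = (d i * b j : ℕ) := by simp [interW, hrc]
  rw [reducedWeight, hw, gadgetPotential_diag_sub n A₃ A₄ U hg]
  by_cases hj0 : j % g = 0
  · rw [hd0 i (by omega) (by omega), hbact j (by omega) (Or.inl hj0)]
    simp [hj0, Nat.cast_sub (by omega : i ≤ n)]
  by_cases hjl : j % g = g - 1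
  · have hig : g ≤ i + 1 := by have := Nat.mod_le i g; omega
    have hle : (n - (i + 1 - g)) * A₃ ≤ A₄ := (Nat.mul_le_mul_right _ (Nat.sub_le _ _)).trans hA
    rw [if_neg hj0, if_pos hjl, if_pos (Or.inr hjl), hdlast i (by omega) (by omega),
      hbact j (by omega) (Or.inr hjl), mul_one]
    push_cast [Nat.cast_sub hle, Nat.cast_sub (by omega : i + 1 - g ≤ n), Nat.cast_sub hig,
      Nat.cast_sub (by omega : 1 ≤ g)]
    ring
  · simp [hj0, hjl]

theorem le_reducedWeight_of_isCostlyArc (hg : 2 ≤ g) (hA : n * A₃ ≤ A₄) (hU₁ : 1 ≤ U)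
    (hU : 2 * (A₄ : ℝ) ≤ √U) {u v : ℕ × ℕ} (hu : u.1 < n) (h : IsCostlyArc g r c u v) :
    (A₃ : ℝ) ≤ ρ u v := by
  obtain ⟨i, j⟩ := u
  have hU' : 2 * (A₄ : ℝ) ≤ U := hU.trans (Real.sqrt_le_self_iff.2 (Or.inr (by exact_mod_cast hU₁)))
  rcases h with rfl | ⟨rfl, hj⟩ | ⟨rfl, hrc⟩
  · exact le_reducedWeight_horizontal hg hA hU' hu j
  · simp [reducedWeight_vertical, hj]
  · exact le_reducedWeight_diag_of_ne hg hA hU hu hrc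

theorem reducedWeight_nonneg (hg : 2 ≤ g) (hA : n * A₃ ≤ A₄) (hU₁ : 1 ≤ U)
    (hU : 2 * (A₄ : ℝ) ≤ √U)
    (hr : ∀ i < n, r i = i % g) (hc : ∀ j < m, c j = j % g)
    (hd0 : ∀ i, i < n - 1 → i % g = 0 → d i = (n - i) * A₃)
    (hdlast : ∀ i, i < n - 1 → i % g = g - 1 → d i = A₄ - (n - (i + 1 - g)) * A₃)
    (hbact : ∀ j, j < m - 1 → (j % g = 0 ∨ j % g = g - 1) → b j = 1)
    {u v : ℕ × ℕ} (h : MStep u v) (hv : v.1 < n ∧ v.2 < m) : 0 ≤ ρ u v := by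
  obtain ⟨i, j⟩ := u
  rcases h.isCheapArc_or_isCostlyArc (g := g) (r := r) (c := c) with
    (⟨rfl, hj⟩ | ⟨rfl, hrc⟩) | hcostly
  · simp [reducedWeight_vertical, hj]
  · rw [reducedWeight_diag_of_eq hg hA hr hc hd0 hdlast hbact hv.1 hv.2 hrc]
    split_ifs <;> positivity
  · exact (Nat.cast_nonneg _).trans
      (le_reducedWeight_of_isCostlyArc hg hA hU₁ hU (by have := h.le.1; omega) hcostly)

theorem acost_reducedWeight_diagThenDown_le (hg : 2 ≤ g) (hgm : g ∣ m - 1)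
    (hA : n * A₃ ≤ A₄) (hb01 : ∀ j, b j ≤ 1)
    (hr : ∀ i < n, r i = i % g) (hc : ∀ j < m, c j = j % g)
    (hd0 : ∀ i, i < n - 1 → i % g = 0 → d i = (n - i) * A₃)
    (hdlast : ∀ i, i < n - 1 → i % g = g - 1 → d i = A₄ - (n - (i + 1 - g)) * A₃)
    (hdother : ∀ i, i < n - 1 → i % g ≠ 0 → i % g ≠ g - 1 → d i ≤ n * A₂)
    (hbact : ∀ j, j < m - 1 → (j % g = 0 ∨ j % g = g - 1) → b j = 1) :
    acost ρ (diagThenDown n m) ≤ (n - 1 : ℕ) * (n * A₂ : ℕ) := by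
  have harc : ∀ x ∈ ((diagThenDown n m).zip (diagThenDown n m).tail).map
      (fun e => ρ e.1 e.2), x ≤ (n * A₂ : ℕ) := by
    simp only [List.mem_map]
    rintro _ ⟨e, he, rfl⟩
    obtain ⟨t, ht, rfl⟩ := mem_zip_tail_diagThenDown he
    by_cases htm : t + 1 < m
    · rw [min_eq_left (by omega), min_eq_left (by omega),
        reducedWeight_diag_of_eq hg hA hr hc hd0 hdlast hbact ht htm
          (by rw [hr t (by omega), hc t (by omega)])]
      split_ifs with hmod
      · positivity
      · obtain ⟨hmod0, hmodl⟩ := not_or.1 hmod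
        exact_mod_cast (Nat.mul_le_mul (hdother t (by omega) hmod0 hmodl) (hb01 t)).trans_eq
          (mul_one _)
    · rw [min_eq_right (by omega), min_eq_right (by omega), reducedWeight_vertical,
        if_pos (Nat.mod_eq_zero_of_dvd hgm)]
      positivity
  refine (List.sum_le_card_nsmul _ _ harc).trans_eq ?_
  simp [diagThenDown]

theorem isCheapArc_of_isMinimal (hmn : m ≤ n) (hm : 2 ≤ m) (hg : 2 ≤ g) (hgm : g ∣ m - 1)
    (hA : n * A₃ ≤ A₄) (hA₂₃ : n ^ 2 * A₂ < A₃) (hU₁ : 1 ≤ U) (hU : 2 * (A₄ : ℝ) ≤ √U)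
    (hb01 : ∀ j, b j ≤ 1)
    (hr : ∀ i < n, r i = i % g) (hc : ∀ j < m, c j = j % g)
    (hd0 : ∀ i, i < n - 1 → i % g = 0 → d i = (n - i) * A₃)
    (hdlast : ∀ i, i < n - 1 → i % g = g - 1 → d i = A₄ - (n - (i + 1 - g)) * A₃)
    (hdother : ∀ i, i < n - 1 → i % g ≠ 0 → i % g ≠ g - 1 → d i ≤ n * A₂)
    (hbact : ∀ j, j < m - 1 → (j % g = 0 ∨ j % g = g - 1) → b j = 1)
    {π : List (ℕ × ℕ)} (hπ : MPath π (0, 0) (n - 1, m - 1))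
    (hmin : ∀ π' : List (ℕ × ℕ), MPath π' (0, 0) (n - 1, m - 1) →
      acost (interW r c d b U) π ≤ acost (interW r c d b U) π')
    {u v : ℕ × ℕ} (huv : (u, v) ∈ π.zip π.tail) : IsCheapArc g r c u v := by
  have harc : ∀ {u v}, (u, v) ∈ π.zip π.tail → MStep u v ∧ v.1 < n ∧ v.2 < m := by
    intro u v huv
    have hv := Prod.mk_le_mk.1 (hπ.le_target v (List.mem_of_mem_tail (List.of_mem_zip huv).2))
    exact ⟨hπ.2.2.2.rel_of_mem_zip_tail huv, by omega, by omega⟩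
  obtain ⟨hstep, hv⟩ := harc huv
  refine hstep.isCheapArc_or_isCostlyArc.resolve_right fun hcostly => ?_
  have hcostly_le := le_reducedWeight_of_isCostlyArc (d := d) (b := b) hg hA hU₁ hU
    (by have := hstep.le.1; omega) hcostly
  have hsingle : ρ u v ≤ acost ρ π := by
    refine List.single_le_sum ?_ _ (List.mem_map_of_mem (f := fun e => ρ e.1 e.2) huv)
    simp only [List.mem_map]
    rintro _ ⟨⟨u', v'⟩, he, rfl⟩
    obtain ⟨hstep', hv'⟩ := harc he
    exact reducedWeight_nonneg hg hA hU₁ hU hr hc hd0 hdlast hbact hstep' hv'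
  have hcanon := mPath_diagThenDown hmn (by omega)
  have hle := hmin _ hcanon
  rw [acost_eq_sub_add_acost_reducedWeight _ (gadgetPotential n g A₃ A₄ U) hπ.2.1 hπ.2.2.1,
    acost_eq_sub_add_acost_reducedWeight _ _ hcanon.2.1 hcanon.2.2.1] at hle
  have hbound := acost_reducedWeight_diagThenDown_le hg hgm hA hb01 hr hc hd0 hdlast hdother
    hbact (U := U)
  have hsmall : ((n - 1 : ℕ) : ℝ) * (n * A₂ : ℕ) < A₃ := by
    have : (n - 1) * (n * A₂) < A₃ :=
      lt_of_le_of_lt (by rw [sq, mul_assoc]; exact Nat.mul_le_mul_right _ (Nat.sub_le _ _))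
        hA₂₃
    exact_mod_cast this
  linarith

end ReducedWeight

section Gadget

variable {n m g : ℕ} {r c : ℕ → ℕ} {π : List (ℕ × ℕ)}

theorem gadget_arc_mem_iff_succ (hπ : MPath π (0, 0) (n - 1, m - 1))
    (hcheap : ∀ u v, (u, v) ∈ π.zip π.tail → IsCheapArc g r c u v)
    (hgm : g ∣ m - 1) (i₀ : ℕ) {j₀ : ℕ} (hj₀ : g ∣ j₀) {p : ℕ} (hp : p + 1 < g) :
    ((i₀ + p, j₀ + p), (i₀ + p + 1, j₀ + p + 1)) ∈ π.zip π.tail ↔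
      ((i₀ + (p + 1), j₀ + (p + 1)), (i₀ + (p + 1) + 1, j₀ + (p + 1) + 1)) ∈
        π.zip π.tail := by
  have hmod : (j₀ + p + 1) % g ≠ 0 := by
    rw [add_assoc, Nat.add_mod, Nat.mod_eq_zero_of_dvd hj₀, zero_add, Nat.mod_mod,
      Nat.mod_eq_of_lt hp]
    omega
  simp only [← add_assoc]
  constructor
  · intro h
    obtain ⟨w, hw⟩ := List.exists_succ_mem_zip_tail h fun hlast => hmod <| by
      rw [hπ.2.2.1, Option.some.injEq, Prod.mk.injEq] at hlast
      rw [← hlast.2]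
      exact Nat.mod_eq_zero_of_dvd hgm
    rwa [(hcheap _ _ hw).eq_diag_of_source hmod] at hw
  · intro h
    obtain ⟨⟨i, j⟩, hu⟩ := List.exists_pred_mem_zip_tail h fun hhead => hmod <| by
      rw [hπ.2.1, Option.some.injEq, Prod.mk.injEq] at hhead
      rw [← hhead.2]
      exact Nat.zero_mod g
    have hdiag := (hcheap _ _ hu).eq_diag_of_target hmod
    simp only [Prod.mk.injEq] at hdiag
    obtain ⟨rfl, rfl⟩ : i = i₀ + p ∧ j = j₀ + p := by omega
    exact hu

theorem gadget_arc_mem_iff_zero (hπ : MPath π (0, 0) (n - 1, m - 1))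
    (hcheap : ∀ u v, (u, v) ∈ π.zip π.tail → IsCheapArc g r c u v)
    (hgm : g ∣ m - 1) (i₀ : ℕ) {j₀ : ℕ} (hj₀ : g ∣ j₀) {p : ℕ} (hp : p < g) :
    ((i₀ + p, j₀ + p), (i₀ + p + 1, j₀ + p + 1)) ∈ π.zip π.tail ↔
      ((i₀, j₀), (i₀ + 1, j₀ + 1)) ∈ π.zip π.tail := by
  induction p with
  | zero => simp only [add_zero]
  | succ p ih =>
    exact (gadget_arc_mem_iff_succ hπ hcheap hgm i₀ hj₀ hp).symm.trans (ih (by omega))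

end Gadget

theorem stmt10_general (n m : ℕ) (r c d b : ℕ → ℕ) (U : ℕ)
    (g A₂ A₃ A₄ : ℕ)
    (hb01 : ∀ j, b j ≤ 1)
    (hmn : m ≤ n) (hm : 2 ≤ m)
    (hg : 2 ≤ g) (hgm : g ∣ (m - 1))
    (hr : ∀ i < n, r i = i % g) (hc : ∀ j < m, c j = j % g)
    (hA₃big : n ^ 2 * A₂ < A₃)
    (hA₄big : n * A₃ + n * A₂ ≤ A₄)
    (hd0 : ∀ i, i < n - 1 → i % g = 0 → d i = (n - i) * A₃)
    (hdlast : ∀ i, i < n - 1 → i % g = g - 1 → d i = A₄ - (n - (i + 1 - g)) * A₃)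
    (hdother : ∀ i, i < n - 1 → i % g ≠ 0 → i % g ≠ g - 1 → d i ≤ n * A₂)
    (hbact : ∀ j, j < m - 1 → (j % g = 0 ∨ j % g = g - 1) → b j = 1)
    (hU : 1 < U)
    (hUbig : (((m - 1) * A₄ : ℕ) : ℝ) < Real.sqrt U) :
    ∀ π : List (ℕ × ℕ), MPath π (0, 0) (n - 1, m - 1) →
      (∀ π' : List (ℕ × ℕ), MPath π' (0, 0) (n - 1, m - 1) →
        acost (interW r c d b U) π ≤ acost (interW r c d b U) π') →
      ∀ i₀ j₀ : ℕ, g ∣ i₀ → g ∣ j₀ → i₀ + g ≤ n - 1 → j₀ + g ≤ m - 1 →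
        (∃ p < g, ((i₀ + p, j₀ + p), (i₀ + p + 1, j₀ + p + 1)) ∈ π.zip π.tail) →
        ∀ p < g, ((i₀ + p, j₀ + p), (i₀ + p + 1, j₀ + p + 1)) ∈ π.zip π.tail := by
  intro π hπ hmin i₀ j₀ _ hj₀ _ _ ⟨p₀, hp₀, hmem⟩ p hp
  have hm₁ : (2 : ℝ) ≤ (m - 1 : ℕ) := by exact_mod_cast hg.trans (Nat.le_of_dvd (by omega) hgm)
  have hU' : 2 * (A₄ : ℝ) ≤ √U := by
    rw [Nat.cast_mul] at hUbig
    nlinarith [(A₄.cast_nonneg : (0 : ℝ) ≤ A₄)]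
  have hcheap : ∀ u v, (u, v) ∈ π.zip π.tail → IsCheapArc g r c u v := fun u v huv =>
    isCheapArc_of_isMinimal hmn hm hg hgm (by omega) hA₃big hU.le hU' hb01 hr hc hd0 hdlast
      hdother hbact hπ hmin huv
  exact (gadget_arc_mem_iff_zero hπ hcheap hgm i₀ hj₀ hp).2
    ((gadget_arc_mem_iff_zero hπ hcheap hgm i₀ hj₀ hp₀).1 hmem)

/-- Consider an Intermediary grid satisfying the gadget
structure with parameters `g, A₂, A₃, A₄` (see the hypotheses below). For
multiples `i₀, j₀` of `g` with `i₀ + g ≤ n−1` and `j₀ + g ≤ m−1`, the main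
diagonal arcs of the gadget with top-left corner `(i₀,j₀)` are the arcs
`(i₀+p, j₀+p)→(i₀+p+1, j₀+p+1)` for `0 ≤ p ≤ g−1`. Every minimum-weight
directed path from `(0,0)` to `(n−1,m−1)` that uses at least one main diagonal
arc of some gadget uses all `g` main diagonal arcs of that gadget. -/
theorem stmt10 (n m : ℕ) (r c d b : ℕ → ℕ) (U : ℕ)
    (g A₂ A₃ A₄ : ℕ)
    (hb01 : ∀ j, b j ≤ 1)
    (hmn : m ≤ n) (hm : 2 ≤ m)
    (hg : 2 ≤ g) (hgn : g ∣ (n - 1)) (hgm : g ∣ (m - 1))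
    (hr : ∀ i < n, r i = i % g) (hc : ∀ j < m, c j = j % g)
    (hA₂ : 0 < A₂) (hA₃ : 0 < A₃) (hA₄ : 0 < A₄)
    (hA₃big : n ^ 2 * A₂ < A₃)
    (hA₄big : n * A₃ + n * A₂ ≤ A₄)
    (hd0 : ∀ i, i < n - 1 → i % g = 0 → d i = (n - i) * A₃)
    (hdlast : ∀ i, i < n - 1 → i % g = g - 1 → d i = A₄ - (n - (i + 1 - g)) * A₃)
    (hdother : ∀ i, i < n - 1 → i % g ≠ 0 → i % g ≠ g - 1 → d i ≤ n * A₂)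
    (hbact : ∀ j, j < m - 1 → (j % g = 0 ∨ j % g = g - 1) → b j = 1)
    (hU : 1 < U)
    (hUbig : (((m - 1) * A₄ : ℕ) : ℝ) < Real.sqrt U) :
    ∀ π : List (ℕ × ℕ), MPath π (0, 0) (n - 1, m - 1) →
      (∀ π' : List (ℕ × ℕ), MPath π' (0, 0) (n - 1, m - 1) →
        acost (interW r c d b U) π ≤ acost (interW r c d b U) π') →
      ∀ i₀ j₀ : ℕ, g ∣ i₀ → g ∣ j₀ → i₀ + g ≤ n - 1 → j₀ + g ≤ m - 1 →
        (∃ p < g, ((i₀ + p, j₀ + p), (i₀ + p + 1, j₀ + p + 1)) ∈ π.zip π.tail) →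
        ∀ p < g, ((i₀ + p, j₀ + p), (i₀ + p + 1, j₀ + p + 1)) ∈ π.zip π.tail :=
  stmt10_general n m r c d b U g A₂ A₃ A₄ hb01 hmn hm hg hgm hr hc hA₃big hA₄big hd0 hdlast hdother
    hbact hU hUbig
end
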